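/- arXiv:1902.06073 — 3 statements merged into one kernel-verified Lean document; each statement's English description precedes it below -/
import Mathlib

section
/- For any s, t ∈ ℂ and any natural number k, there exists a unique polynomial q_k^{s,t}(ξ,η) in two variables, homogeneous of degree k, such that (∂/∂ξ - ∂/∂η)^k (ξ^{s+k} η^{t+k}) = ξ^s η^t · q_k^{s,t}(ξ,η), where the identity holds as functions on the open set {ξ > 0, η > 0}. -/
open MvPolynomial Complex

/-- The operator ∂/∂ξ - ∂/∂η acting on functions of two real variables. -/
noncomputable def Dop (f : ℝ → ℝ → ℂ) : ℝ → ℝ → ℂ :=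
  fun x y => deriv (fun u => f u y) x - deriv (fun v => f x v) y

/-!
Writing `ξ^(s+k+1) η^(t+k+1) = ξ^(s+1+k) η^(t+1+k)`, induction on `k` shows that `k`
applications of `∂_ξ - ∂_η` produce `ξ^(s+1) η^(t+1) q_k^{s+1,t+1}`; one more application,
by the Leibniz rule, gives `ξ^s η^t` times a polynomial homogeneous of degree `k + 1`.
Uniqueness holds because `ξ^s η^t` does not vanish on the open quadrant and a polynomial
vanishing on a product of two infinite sets is zero.
-/

namespace MvPolynomial

variable {σ R : Type*} [CommSemiring R]

theorem IsHomogeneous.X_mul_pderiv {φ : MvPolynomial σ R} {n : ℕ} (h : φ.IsHomogeneous n)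
    (i : σ) : (X i * pderiv i φ).IsHomogeneous n := by
  cases n with
  | zero =>
    rw [← totalDegree_zero_iff_isHomogeneous, totalDegree_eq_zero_iff_eq_C] at h
    rw [h, pderiv_C, mul_zero]
    exact isHomogeneous_zero σ R 0
  | succ n => simpa [add_comm] using (isHomogeneous_X R i).mul h.pderiv

theorem hasDerivAt_eval_update {𝕜 : Type*} [NontriviallyNormedField 𝕜] [DecidableEq σ]
    (P : MvPolynomial σ 𝕜) (v : σ → 𝕜) (i : σ) (a : 𝕜) :
    HasDerivAt (fun z => eval (Function.update v i z) P)
      (eval (Function.update v i a) (pderiv i P)) a := by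
  induction P using MvPolynomial.induction_on with
  | C c => simpa using hasDerivAt_const a c
  | add p q hp hq => simpa only [map_add] using hp.fun_add hq
  | mul_X p j hp =>
    by_cases hj : j = i
    · subst hj
      simpa [add_comm, mul_comm] using hp.fun_mul (hasDerivAt_id' a)
    · simpa [hj, mul_comm] using hp.mul_const (v j)

end MvPolynomial

theorem hasDerivAt_ofReal_cpow_add_one {x : ℝ} (hx : 0 < x) (s : ℂ) :
    HasDerivAt (fun u : ℝ => (u : ℂ) ^ (s + 1)) ((s + 1) * (x : ℂ) ^ s) x := by
  simpa using
    ((hasDerivAt_id (x : ℂ)).cpow_const (c := s + 1) (ofReal_mem_slitPlane.2 hx)).comp_ofReal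

theorem Dop_apply_of_hasDerivAt {f : ℝ → ℝ → ℂ} {x y : ℝ} {a b : ℂ}
    (ha : HasDerivAt (fun u => f u y) a x) (hb : HasDerivAt (fun v => f x v) b y) :
    Dop f x y = a - b := by
  rw [Dop, ha.deriv, hb.deriv]

theorem Dop_congr_of_eqOn_quadrant {f g : ℝ → ℝ → ℂ}
    (h : ∀ u v : ℝ, 0 < u → 0 < v → f u v = g u v) {x y : ℝ} (hx : 0 < x) (hy : 0 < y) :
    Dop f x y = Dop g x y := by
  have hξ : (fun u => f u y) =ᶠ[nhds x] fun u => g u y :=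
    Filter.mem_of_superset (Ioi_mem_nhds hx) fun u hu => h u y hu hy
  have hη : (fun v => f x v) =ᶠ[nhds y] fun v => g x v :=
    Filter.mem_of_superset (Ioi_mem_nhds hy) fun v hv => h x v hx hv
  rw [Dop, Dop, hξ.deriv_eq, hη.deriv_eq]

/-- By the Leibniz rule, `(∂_ξ - ∂_η) (ξ^(s+1) η^(t+1) P) = ξ^s η^t · dopStep s t P`,
so `q_{k+1}^{s,t} = dopStep s t q_k^{s+1,t+1}`. -/
noncomputable def dopStep (s t : ℂ) (P : MvPolynomial (Fin 2) ℂ) : MvPolynomial (Fin 2) ℂ :=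
  C (s + 1) * (X 1 * P) - C (t + 1) * (X 0 * P)
    + X 1 * (X 0 * pderiv 0 P) - X 0 * (X 1 * pderiv 1 P)

theorem MvPolynomial.IsHomogeneous.dopStep {P : MvPolynomial (Fin 2) ℂ} {n : ℕ}
    (hP : P.IsHomogeneous n) (s t : ℂ) : (dopStep s t P).IsHomogeneous (n + 1) := by
  rw [add_comm]
  have hX (i : Fin 2) := isHomogeneous_X ℂ i
  exact ((((hX 1).mul hP).C_mul _).sub (((hX 0).mul hP).C_mul _)).add
    ((hX 1).mul (hP.X_mul_pderiv 0)) |>.sub ((hX 0).mul (hP.X_mul_pderiv 1))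

theorem Dop_cpow_mul_eval (s t : ℂ) (P : MvPolynomial (Fin 2) ℂ) {x y : ℝ}
    (hx : 0 < x) (hy : 0 < y) :
    Dop (fun u v => (u : ℂ) ^ (s + 1) * (v : ℂ) ^ (t + 1) * eval ![(u : ℂ), (v : ℂ)] P) x y
      = (x : ℂ) ^ s * (y : ℂ) ^ t * eval ![(x : ℂ), (y : ℂ)] (dopStep s t P) := by
  have hupd (a b z : ℂ) :
      Function.update ![a, b] 0 z = ![z, b] ∧ Function.update ![a, b] 1 z = ![a, z] := by
    constructor <;> ext i <;> fin_cases i <;> simp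
  have hP₀ : HasDerivAt (fun u : ℝ => eval ![(u : ℂ), (y : ℂ)] P)
      (eval ![(x : ℂ), (y : ℂ)] (pderiv 0 P)) x := by
    simpa only [(hupd _ _ _).1] using
      (hasDerivAt_eval_update P ![(x : ℂ), (y : ℂ)] 0 x).comp_ofReal
  have hP₁ : HasDerivAt (fun v : ℝ => eval ![(x : ℂ), (v : ℂ)] P)
      (eval ![(x : ℂ), (y : ℂ)] (pderiv 1 P)) y := by
    simpa only [(hupd _ _ _).2] using
      (hasDerivAt_eval_update P ![(x : ℂ), (y : ℂ)] 1 y).comp_ofReal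
  rw [Dop_apply_of_hasDerivAt
    (((hasDerivAt_ofReal_cpow_add_one hx s).mul_const _).fun_mul hP₀)
    (((hasDerivAt_ofReal_cpow_add_one hy t).const_mul _).fun_mul hP₁)]
  have hx₀ : (x : ℂ) ≠ 0 := ofReal_ne_zero.2 hx.ne'
  have hy₀ : (y : ℂ) ≠ 0 := ofReal_ne_zero.2 hy.ne'
  simp only [dopStep, cpow_add _ _ hx₀, cpow_add _ _ hy₀, cpow_one, map_add, map_sub, map_mul,
    eval_C, eval_X, Matrix.cons_val_zero, Matrix.cons_val_one, Matrix.cons_val_fin_one]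
  ring

noncomputable def qPoly : ℕ → ℂ → ℂ → MvPolynomial (Fin 2) ℂ
  | 0, _, _ => 1
  | k + 1, s, t => dopStep s t (qPoly k (s + 1) (t + 1))

theorem isHomogeneous_qPoly (k : ℕ) : ∀ s t : ℂ, (qPoly k s t).IsHomogeneous k := by
  induction k with
  | zero => exact fun _ _ => isHomogeneous_one _ _
  | succ k ih => exact fun s t => (ih (s + 1) (t + 1)).dopStep s t

theorem iterate_Dop_cpow_eq (k : ℕ) : ∀ (s t : ℂ) {x y : ℝ}, 0 < x → 0 < y →
    (Dop^[k] (fun ξ η => (ξ : ℂ) ^ (s + k) * (η : ℂ) ^ (t + k))) x y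
      = (x : ℂ) ^ s * (y : ℂ) ^ t * eval ![(x : ℂ), (y : ℂ)] (qPoly k s t) := by
  induction k with
  | zero => intro s t x y _ _; simp [qPoly]
  | succ k ih =>
    intro s t x y hx hy
    have hexp (r : ℂ) : r + ↑(k + 1) = r + 1 + k := by push_cast; ring
    simp only [hexp, Function.iterate_succ_apply']
    rw [Dop_congr_of_eqOn_quadrant (fun u v hu hv => ih (s + 1) (t + 1) hu hv) hx hy]
    exact Dop_cpow_mul_eval s t _ hx hy

theorem eq_of_eval_eq_on_quadrant {p q : MvPolynomial (Fin 2) ℂ}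
    (h : ∀ x y : ℝ, 0 < x → 0 < y →
      eval ![(x : ℂ), (y : ℂ)] p = eval ![(x : ℂ), (y : ℂ)] q) : p = q := by
  refine funext_set (fun _ : Fin 2 => (ofReal '' Set.Ioi 0 : Set ℂ))
    (fun _ => (Set.Ioi_infinite 0).image ofReal_injective.injOn) fun v hv => ?_
  obtain ⟨x, hx, hvx⟩ := hv 0 trivial
  obtain ⟨y, hy, hvy⟩ := hv 1 trivial
  have hv' : v = ![(x : ℂ), (y : ℂ)] := by ext i; fin_cases i <;> simp [hvx, hvy]
  exact hv' ▸ h x y hx hy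

theorem stmt0 (s t : ℂ) (k : ℕ) :
    ∃! q : MvPolynomial (Fin 2) ℂ,
      q.IsHomogeneous k ∧
      ∀ x y : ℝ, 0 < x → 0 < y →
        (Dop^[k] (fun ξ η => (ξ : ℂ) ^ (s + k) * (η : ℂ) ^ (t + k))) x y
          = (x : ℂ) ^ s * (y : ℂ) ^ t * MvPolynomial.eval ![(x : ℂ), (y : ℂ)] q := by
  refine ⟨qPoly k s t,
    ⟨isHomogeneous_qPoly k s t, fun x y => iterate_Dop_cpow_eq k s t⟩, ?_⟩
  rintro q ⟨-, hq⟩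
  have hpow_ne_zero {r : ℝ} (hr : 0 < r) (z : ℂ) : (r : ℂ) ^ z ≠ 0 :=
    cpow_ne_zero_iff.2 (.inl (ofReal_ne_zero.2 hr.ne'))
  refine eq_of_eval_eq_on_quadrant fun x y hx hy =>
    mul_left_cancel₀ (mul_ne_zero (hpow_ne_zero hx s) (hpow_ne_zero hy t)) ?_
  exact (hq x y hx hy).symm.trans (iterate_Dop_cpow_eq k s t hx hy)
end

section
/- The polynomials q_k^{α,β} defined by (∂/∂ξ - ∂/∂η)^k (ξ^{α+k} η^{β+k}) = ξ^α η^β q_k^{α,β}(ξ,η) satisfy the recurrence q_k^{α,β} = ξη(∂/∂ξ - ∂/∂η) q_{k-1}^{α+1,β+1} + (-(β+1)ξ + (α+1)η) q_{k-1}^{α+1,β+1} for all k ≥ 1. -/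
open MvPolynomial Complex

/-!
Because `ξ^(α+k) η^(β+k) = ξ^((α+1)+(k-1)) η^((β+1)+(k-1))`, the first `k-1` applications of
`∂ξ - ∂η` produce `ξ^(α+1) η^(β+1) q_{k-1}^{α+1,β+1}` on the open quadrant. One more application,
by the product rule, gives `ξ^α η^β` times the right-hand side of the recurrence, and two
polynomials agreeing on the open quadrant are equal.
-/

theorem MvPolynomial.hasDerivAt_eval_update_s1 {𝕜 σ : Type*} [NontriviallyNormedField 𝕜]
    [DecidableEq σ] (P : MvPolynomial σ 𝕜) (v : σ → 𝕜) (i : σ) (z : 𝕜) :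
    HasDerivAt (fun t => eval (Function.update v i t) P)
      (eval (Function.update v i z) (pderiv i P)) z := by
  induction P using MvPolynomial.induction_on with
  | C a => simpa using hasDerivAt_const z a
  | add p r hp hr => simp only [map_add]; exact hp.add hr
  | mul_X p j hp =>
    simp only [map_mul, eval_X, Derivation.leibniz, smul_eq_mul, map_add]
    obtain rfl | hij := eq_or_ne j i
    · simp only [Function.update_self, pderiv_X_self, map_one, mul_one]
      exact (hp.mul (hasDerivAt_id z)).congr_deriv (by simp; ring)
    · simp only [Function.update_of_ne hij, pderiv_X_of_ne hij, map_zero, mul_zero, zero_add]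
      exact (hp.mul_const (v j)).congr_deriv (mul_comm _ _)

theorem hasDerivAt_ofReal_cpow {x : ℝ} (hx : 0 < x) (c : ℂ) :
    HasDerivAt (fun t : ℝ => (t : ℂ) ^ c) (c * (x : ℂ) ^ (c - 1)) x :=
  (hasStrictDerivAt_cpow_const (ofReal_mem_slitPlane.mpr hx)).hasDerivAt.comp_ofReal

theorem MvPolynomial.eq_of_eval_eq_of_pos {P Q : MvPolynomial (Fin 2) ℂ}
    (h : ∀ x y : ℝ, 0 < x → 0 < y → eval ![(x : ℂ), y] P = eval ![(x : ℂ), y] Q) : P = Q := by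
  refine funext_set (fun _ => ofReal '' Set.Ioi 0)
    (fun _ => (Set.Ioi_infinite 0).image ofReal_injective.injOn) fun z hz => ?_
  obtain ⟨x, hx, hzx⟩ := hz 0 trivial
  obtain ⟨y, hy, hzy⟩ := hz 1 trivial
  have hz : z = ![(x : ℂ), y] := by ext i; fin_cases i <;> simp [hzx, hzy]
  exact hz ▸ h x y hx hy

noncomputable def twistedDop (a b : ℂ) (Q : MvPolynomial (Fin 2) ℂ) : MvPolynomial (Fin 2) ℂ :=
  X 0 * X 1 * (pderiv 0 Q - pderiv 1 Q) + (C (-b) * X 0 + C a * X 1) * Q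

theorem Dop_apply_of_eq_cpow_mul_cpow_mul_eval {f : ℝ → ℝ → ℂ} {a b : ℂ}
    {Q : MvPolynomial (Fin 2) ℂ}
    (hf : ∀ u v : ℝ, 0 < u → 0 < v →
      f u v = (u : ℂ) ^ (a + 1) * (v : ℂ) ^ (b + 1) * eval ![(u : ℂ), v] Q)
    {x y : ℝ} (hx : 0 < x) (hy : 0 < y) :
    Dop f x y = (x : ℂ) ^ a * (y : ℂ) ^ b * eval ![(x : ℂ), y] (twistedDop (a + 1) (b + 1) Q) := by
  have hQx : HasDerivAt (fun u : ℝ => eval ![(u : ℂ), y] Q)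
      (eval ![(x : ℂ), y] (pderiv 0 Q)) x := by
    have hupd (t : ℂ) : Function.update ![(x : ℂ), y] 0 t = ![t, y] := by
      ext i; fin_cases i <;> rfl
    simpa only [hupd] using (hasDerivAt_eval_update_s1 Q ![(x : ℂ), y] 0 x).comp_ofReal
  have hQy : HasDerivAt (fun v : ℝ => eval ![(x : ℂ), v] Q)
      (eval ![(x : ℂ), y] (pderiv 1 Q)) y := by
    have hupd (t : ℂ) : Function.update ![(x : ℂ), y] 1 t = ![(x : ℂ), t] := by
      ext i; fin_cases i <;> rfl
    simpa only [hupd] using (hasDerivAt_eval_update_s1 Q ![(x : ℂ), y] 1 y).comp_ofReal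
  have hfx : HasDerivAt (fun u => f u y)
      ((a + 1) * (x : ℂ) ^ a * (y : ℂ) ^ (b + 1) * eval ![(x : ℂ), y] Q
        + (x : ℂ) ^ (a + 1) * (y : ℂ) ^ (b + 1) * eval ![(x : ℂ), y] (pderiv 0 Q)) x := by
    refine HasDerivAt.congr_of_eventuallyEq ?_
      (Filter.eventually_of_mem (Ioi_mem_nhds hx) fun u hu => hf u y hu hy)
    exact ((hasDerivAt_ofReal_cpow hx (a + 1)).mul_const ((y : ℂ) ^ (b + 1))).mul hQx
      |>.congr_deriv (by simp)
  have hfy : HasDerivAt (fun v => f x v)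
      ((b + 1) * (x : ℂ) ^ (a + 1) * (y : ℂ) ^ b * eval ![(x : ℂ), y] Q
        + (x : ℂ) ^ (a + 1) * (y : ℂ) ^ (b + 1) * eval ![(x : ℂ), y] (pderiv 1 Q)) y := by
    refine HasDerivAt.congr_of_eventuallyEq ?_
      (Filter.eventually_of_mem (Ioi_mem_nhds hy) fun v hv => hf x v hx hv)
    exact ((hasDerivAt_ofReal_cpow hy (b + 1)).const_mul ((x : ℂ) ^ (a + 1))).mul hQy
      |>.congr_deriv (by rw [add_sub_cancel_right]; ring)
  have hxa : (x : ℂ) ^ (a + 1) = (x : ℂ) ^ a * x := by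
    rw [cpow_add _ _ (ofReal_ne_zero.mpr hx.ne'), cpow_one]
  have hyb : (y : ℂ) ^ (b + 1) = (y : ℂ) ^ b * y := by
    rw [cpow_add _ _ (ofReal_ne_zero.mpr hy.ne'), cpow_one]
  rw [Dop, hfx.deriv, hfy.deriv, hxa, hyb]
  simp only [twistedDop, map_add, map_sub, map_mul, map_neg, eval_X, eval_C, Matrix.cons_val_zero,
    Matrix.cons_val_one]
  ring

theorem stmt1 (q : ℂ → ℂ → ℕ → MvPolynomial (Fin 2) ℂ)
    (hq : ∀ (α β : ℂ) (k : ℕ) (x y : ℝ), 0 < x → 0 < y →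
      (Dop^[k] (fun ξ η => (ξ : ℂ) ^ (α + k) * (η : ℂ) ^ (β + k))) x y
        = (x : ℂ) ^ α * (y : ℂ) ^ β * MvPolynomial.eval ![(x : ℂ), (y : ℂ)] (q α β k))
    (α β : ℂ) (k : ℕ) (hk : 1 ≤ k) :
    q α β k
      = X 0 * X 1 *
          (pderiv 0 (q (α + 1) (β + 1) (k - 1)) - pderiv 1 (q (α + 1) (β + 1) (k - 1)))
        + (C (-(β + 1)) * X 0 + C (α + 1) * X 1) * q (α + 1) (β + 1) (k - 1) := by
  obtain ⟨m, rfl⟩ := Nat.exists_eq_add_of_le' hk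
  rw [Nat.add_sub_cancel]
  change _ = twistedDop (α + 1) (β + 1) (q (α + 1) (β + 1) m)
  refine eq_of_eval_eq_of_pos fun x y hx hy => ?_
  have hm : ∀ u v : ℝ, 0 < u → 0 < v →
      (Dop^[m] fun ξ η => (ξ : ℂ) ^ (α + (m + 1 : ℕ)) * (η : ℂ) ^ (β + (m + 1 : ℕ))) u v
        = (u : ℂ) ^ (α + 1) * (v : ℂ) ^ (β + 1) * eval ![(u : ℂ), v] (q (α + 1) (β + 1) m) := by
    intro u v hu hv
    convert hq (α + 1) (β + 1) m u v hu hv using 6 <;> push_cast <;> ring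
  have h := hq α β (m + 1) x y hx hy
  rw [Function.iterate_succ_apply', Dop_apply_of_eq_cpow_mul_cpow_mul_eval hm hx hy] at h
  refine mul_left_cancel₀ ?_ h.symm
  simp [hx.ne', hy.ne']
end

section
/- Define polynomials A_k^γ in two variables (s,t) by (∂/∂t)^k (s²+t²)^{γ+k} = A_k^γ(s,t) (s²+t²)^γ. Then A_k^γ(s,t) = c_k(γ+1/2)^{-1} (-i)^k s^k C_k^{γ+1/2}(t/(is)), where C_k^λ is the Gegenbauer polynomial defined by the Rodrigues formula C_k^λ(t) = c_k(λ)(1-t²)^{-(λ-1/2)}(d/dt)^k (1-t²)^{k+λ-1/2} with c_k(λ) = (-1)^k Γ(λ+1/2)Γ(k+2λ) / (2^k k! Γ(2λ) Γ(k+λ+1/2)). -/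
open MvPolynomial Complex

/-- The constant `c_k(λ)` in the Rodrigues formula for the Gegenbauer polynomials. -/
noncomputable def ckG (k : ℕ) (l : ℂ) : ℂ :=
  ((-1 : ℂ) ^ k * Complex.Gamma (l + 1 / 2) * Complex.Gamma (k + 2 * l)) /
    (2 ^ k * (Nat.factorial k : ℂ) * Complex.Gamma (2 * l) * Complex.Gamma (k + l + 1 / 2))

/-!
For fixed `s > 0` the function `z ↦ (s² + z²)^(γ+k)` is holomorphic on the disc `‖z‖ < s`, so the
defining identity of `A`, known on the real diameter, holds on the whole disc. On the imaginary
diameter `z = i s u` one has `s² + z² = s² (1 - u²)`, and the chain rule turns the `k`-th derivative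
there into `(s²)^(γ+k) (i s)^(-k)` times the `k`-th derivative of `(1 - u²)^(k+γ)`, which is the
Rodrigues expression for `C_k^(γ+1/2)(u)`. This gives the identity for `s > 0` and `t ∈ i s (-1, 1)`;
both sides are entire in `t / (i s)` and in `s`, so the identity theorem extends it to all `s ≠ 0`.
-/

open Filter Topology Set Metric

theorem AnalyticOnNhd.eqOn_of_preconnected_of_eventuallyEq_ofReal {f g : ℂ → ℂ} {U : Set ℂ}
    (hf : AnalyticOnNhd ℂ f U) (hg : AnalyticOnNhd ℂ g U) (hU : IsPreconnected U) {x₀ : ℝ}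
    (hx₀ : (x₀ : ℂ) ∈ U) (hfg : ∀ᶠ x : ℝ in 𝓝 x₀, f x = g x) : EqOn f g U := by
  refine hf.eqOn_of_preconnected_of_frequently_eq hg hU hx₀ ?_
  have hreal : Tendsto ((↑) : ℝ → ℂ) (𝓝[≠] x₀) (𝓝[≠] (x₀ : ℂ)) :=
    continuous_ofReal.continuousWithinAt.tendsto_nhdsWithin fun _ _ ↦ by simp_all
  exact hreal.frequently (hfg.filter_mono nhdsWithin_le_nhds).frequently

theorem AnalyticAt.eval_vecCons_two {a b : ℂ → ℂ} {z : ℂ} (ha : AnalyticAt ℂ a z)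
    (hb : AnalyticAt ℂ b z) (p : MvPolynomial (Fin 2) ℂ) :
    AnalyticAt ℂ (fun w ↦ eval ![a w, b w] p) z :=
  AnalyticAt.aeval_mvPolynomial (f := fun w ↦ ![a w, b w]) (Fin.forall_fin_two.2 ⟨ha, hb⟩) p

theorem iteratedDeriv_comp_ofReal_mul {F : ℂ → ℂ} {U : Set ℂ} (hU : IsOpen U)
    (hF : DifferentiableOn ℂ F U) (c : ℂ) (n : ℕ) {t : ℝ} (ht : c * t ∈ U) :
    iteratedDeriv n (fun u : ℝ ↦ F (c * u)) t = c ^ n * iteratedDeriv n F (c * t) := by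
  induction n generalizing F with
  | zero => simp
  | succ n ih =>
    have hderiv : deriv (fun u : ℝ ↦ F (c * u)) =ᶠ[𝓝 t] fun u ↦ c * deriv F (c * u) := by
      have hpre : IsOpen {u : ℝ | c * u ∈ U} := hU.preimage (by fun_prop)
      filter_upwards [hpre.mem_nhds ht] with u hu
      have hF' := (hF.differentiableAt (hU.mem_nhds hu)).hasDerivAt
      have := ((hF'.comp (u : ℂ) ((hasDerivAt_id _).const_mul c)).comp_ofReal)
      simpa [mul_comm] using this.deriv
    rw [iteratedDeriv_succ', iteratedDeriv_succ', hderiv.iteratedDeriv_eq,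
      iteratedDeriv_const_mul_field, ih (hF.deriv hU)]
    ring

theorem ofReal_sq_add_sq_mem_slitPlane {r : ℝ} {z : ℂ} (hz : ‖z‖ < r) :
    (r : ℂ) ^ 2 + z ^ 2 ∈ slitPlane := by
  refine mem_slitPlane_iff.2 (Or.inl ?_)
  have hre : -‖z‖ ^ 2 ≤ (z ^ 2).re := by
    rw [← norm_pow]; exact neg_le_of_abs_le (abs_re_le_norm _)
  have : ((r : ℂ) ^ 2 + z ^ 2).re = r ^ 2 + (z ^ 2).re := by simp [← ofReal_pow]
  nlinarith [norm_nonneg z]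

theorem differentiableOn_sq_add_sq_cpow (r : ℝ) (b : ℂ) :
    DifferentiableOn ℂ (fun z ↦ ((r : ℂ) ^ 2 + z ^ 2) ^ b) (ball 0 r) := fun z hz ↦
  ((by fun_prop : DifferentiableAt ℂ (fun z : ℂ ↦ (r : ℂ) ^ 2 + z ^ 2) z).cpow
    (differentiableAt_const b)
    (ofReal_sq_add_sq_mem_slitPlane (by simpa using hz))).differentiableWithinAt

theorem eqOn_ball_of_iteratedDeriv_sq_add_sq_cpow {s : ℝ} (hs : 0 < s) {n : ℕ} {b : ℂ}
    {P : ℂ → ℂ} (hP : Differentiable ℂ P)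
    (h : ∀ t : ℝ, iteratedDeriv n (fun u : ℝ ↦ ((s ^ 2 + u ^ 2 : ℝ) : ℂ) ^ (b + n)) t
      = P t * ((s ^ 2 + t ^ 2 : ℝ) : ℂ) ^ b) :
    EqOn (iteratedDeriv n fun z ↦ ((s : ℂ) ^ 2 + z ^ 2) ^ (b + n))
      (fun z ↦ P z * ((s : ℂ) ^ 2 + z ^ 2) ^ b) (ball 0 s) := by
  have hF := differentiableOn_sq_add_sq_cpow s (b + n)
  refine AnalyticOnNhd.eqOn_of_preconnected_of_eventuallyEq_ofReal (x₀ := 0) ?_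
    ((hP.differentiableOn.mul (differentiableOn_sq_add_sq_cpow s b)).analyticOnNhd isOpen_ball)
    (convex_ball 0 s).isPreconnected (by simpa using hs) ?_
  · rw [iteratedDeriv_eq_iterate]
    exact (hF.analyticOnNhd isOpen_ball).iterated_deriv n
  · filter_upwards [Ioo_mem_nhds (neg_lt_zero.2 hs) hs] with t ht
    have hreal := iteratedDeriv_comp_ofReal_mul isOpen_ball hF 1 n
      (t := t) (by simpa [abs_lt] using ht)
    simp only [one_mul, one_pow] at hreal
    rw [← hreal]
    simpa using h t

theorem I_mul_ofReal_mul_mem_ball {s u : ℝ} (hs : 0 < s) (hu : u ∈ Ioo (-1 : ℝ) 1) :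
    I * s * u ∈ ball (0 : ℂ) s := by
  simpa [abs_of_pos hs] using mul_lt_of_lt_one_right hs (abs_lt.2 hu)

theorem sq_add_sq_I_mul_cpow {s u : ℝ} (hu : u ^ 2 ≤ 1) (b : ℂ) :
    ((s : ℂ) ^ 2 + (I * s * u) ^ 2) ^ b = ((s ^ 2 : ℝ) : ℂ) ^ b * ((1 - u ^ 2 : ℝ) : ℂ) ^ b := by
  rw [← mul_cpow_ofReal_nonneg (sq_nonneg s) (sub_nonneg.2 hu)]
  push_cast
  congr 1
  linear_combination (s : ℂ) ^ 2 * (u : ℂ) ^ 2 * I_mul_I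

theorem iteratedDeriv_sq_add_sq_cpow_I_mul {s : ℝ} (hs : 0 < s) (n : ℕ) (b : ℂ) {u : ℝ}
    (hu : u ∈ Ioo (-1 : ℝ) 1) :
    (I * s) ^ n * iteratedDeriv n (fun z ↦ ((s : ℂ) ^ 2 + z ^ 2) ^ b) (I * s * u)
      = ((s ^ 2 : ℝ) : ℂ) ^ b * iteratedDeriv n (fun v : ℝ ↦ ((1 - v ^ 2 : ℝ) : ℂ) ^ b) u := by
  rw [← iteratedDeriv_comp_ofReal_mul isOpen_ball (differentiableOn_sq_add_sq_cpow s b) _ n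
    (I_mul_ofReal_mul_mem_ball hs hu), ← iteratedDeriv_const_mul_field]
  apply Filter.EventuallyEq.iteratedDeriv_eq
  filter_upwards [Ioo_mem_nhds hu.1 hu.2] with v hv
  exact sq_add_sq_I_mul_cpow (by nlinarith [hv.1, hv.2]) b

theorem eval_I_mul_eq_of_rodrigues {γ c : ℂ} {k : ℕ} {A : MvPolynomial (Fin 2) ℂ}
    {Cg : Polynomial ℂ} (hc : c ≠ 0) {s : ℝ} (hs : 0 < s)
    (hA : ∀ t : ℝ, iteratedDeriv k (fun u : ℝ ↦ ((s ^ 2 + u ^ 2 : ℝ) : ℂ) ^ (γ + k)) t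
      = eval ![(s : ℂ), (t : ℂ)] A * ((s ^ 2 + t ^ 2 : ℝ) : ℂ) ^ γ)
    {u : ℝ} (hu : u ∈ Ioo (-1 : ℝ) 1)
    (hCg : Cg.eval (u : ℂ) = c * ((1 - u ^ 2 : ℝ) : ℂ) ^ (-γ) *
      iteratedDeriv k (fun v : ℝ ↦ ((1 - v ^ 2 : ℝ) : ℂ) ^ ((k : ℂ) + γ)) u) :
    eval ![(s : ℂ), I * s * u] A = c⁻¹ * (-I) ^ k * s ^ k * Cg.eval (u : ℂ) := by
  have hQ : u ^ 2 < 1 := by nlinarith [hu.1, hu.2]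
  have hseg := iteratedDeriv_sq_add_sq_cpow_I_mul hs k (γ + k) hu
  rw [eqOn_ball_of_iteratedDeriv_sq_add_sq_cpow hs (P := fun z ↦ eval ![(s : ℂ), z] A)
    (fun z ↦ (analyticAt_const.eval_vecCons_two analyticAt_id A).differentiableAt) hA
    (I_mul_ofReal_mul_mem_ball hs hu)] at hseg
  beta_reduce at hseg
  have hSk : ((s ^ 2 : ℝ) : ℂ) ^ (γ + k) = ((s ^ 2 : ℝ) : ℂ) ^ γ * ((s : ℂ) ^ k) ^ 2 := by
    rw [cpow_add _ _ (by simp [hs.ne']), cpow_natCast]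
    push_cast
    ring
  have hQγ : ((1 - u ^ 2 : ℝ) : ℂ) ^ γ ≠ 0 := by
    rw [Ne, cpow_eq_zero_iff]; exact fun h ↦ (sub_pos.2 hQ).ne' (by exact_mod_cast h.1)
  have hSγ : ((s ^ 2 : ℝ) : ℂ) ^ γ ≠ 0 := by
    rw [Ne, cpow_eq_zero_iff]; exact fun h ↦ by simp [hs.ne'] at h
  have hCgQ : ((1 - u ^ 2 : ℝ) : ℂ) ^ γ * Cg.eval (u : ℂ)
      = c * iteratedDeriv k (fun v : ℝ ↦ ((1 - v ^ 2 : ℝ) : ℂ) ^ (γ + k)) u := by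
    rw [hCg, cpow_neg, add_comm (k : ℂ) γ]
    field_simp
  have hI : (-I) ^ k * I ^ k = 1 := by rw [← mul_pow]; simp
  rw [sq_add_sq_I_mul_cpow hQ.le, hSk, mul_pow] at hseg
  set Sγ := ((s ^ 2 : ℝ) : ℂ) ^ γ
  set Qγ := ((1 - u ^ 2 : ℝ) : ℂ) ^ γ
  set D := iteratedDeriv k (fun v : ℝ ↦ ((1 - v ^ 2 : ℝ) : ℂ) ^ (γ + k)) u
  have hs' : (s : ℂ) ^ k ≠ 0 := pow_ne_zero _ (ofReal_ne_zero.2 hs.ne')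
  refine mul_right_cancel₀ (b := c * I ^ k * s ^ k * Sγ * Qγ)
    (by simp [hc, hs', hSγ, hQγ, I_ne_zero]) ?_
  -- both sides reduce to `c Sγ s^(2k) D`, using `(-I)^k I^k = 1` and `Qγ Cg(u) = c D`
  linear_combination c * hseg - (-I) ^ k * I ^ k * (s : ℂ) ^ k * s ^ k * Sγ * hCgQ
    - c * (s : ℂ) ^ k * s ^ k * Sγ * D * hI
    - (-I) ^ k * I ^ k * (s : ℂ) ^ k * s ^ k * Sγ * Qγ * Cg.eval (u : ℂ) * mul_inv_cancel₀ hc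

theorem eval_eq_of_eval_I_mul_eq {A : MvPolynomial (Fin 2) ℂ} {Q : Polynomial ℂ} {c : ℂ} {k : ℕ}
    (h : ∀ s : ℝ, 0 < s → ∀ u ∈ Ioo (-1 : ℝ) 1,
      eval ![(s : ℂ), I * s * u] A = c * (-I) ^ k * s ^ k * Q.eval (u : ℂ))
    {s : ℂ} (hs : s ≠ 0) (t : ℂ) :
    eval ![s, t] A = c * (-I) ^ k * s ^ k * Q.eval (t / (I * s)) := by
  have hQ : AnalyticOnNhd ℂ (Q.eval ·) univ := AnalyticOnNhd.eval_polynomial Q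
  have hw (s : ℝ) (hs : 0 < s) : EqOn (fun w ↦ eval ![(s : ℂ), I * s * w] A)
      (fun w ↦ c * (-I) ^ k * s ^ k * Q.eval w) univ := by
    refine AnalyticOnNhd.eqOn_of_preconnected_of_eventuallyEq_ofReal (x₀ := 0)
      (fun w _ ↦ analyticAt_const.eval_vecCons_two (by fun_prop) A)
      (fun w hw ↦ analyticAt_const.mul (hQ w hw)) isPreconnected_univ (mem_univ _) ?_
    filter_upwards [Ioo_mem_nhds (by norm_num : (-1 : ℝ) < 0) one_pos] using h s hs
  have hz (w : ℂ) : EqOn (fun z ↦ eval ![z, I * z * w] A)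
      (fun z ↦ c * (-I) ^ k * z ^ k * Q.eval w) univ := by
    refine AnalyticOnNhd.eqOn_of_preconnected_of_eventuallyEq_ofReal (x₀ := 1)
      (fun z _ ↦ analyticAt_id.eval_vecCons_two (by fun_prop) A)
      (fun z _ ↦ (analyticAt_const.mul (analyticAt_id.pow k)).mul analyticAt_const)
      isPreconnected_univ (mem_univ _) ?_
    filter_upwards [Ioi_mem_nhds one_pos] with s hs using hw s hs (mem_univ w)
  have hIs : I * s ≠ 0 := mul_ne_zero I_ne_zero hs
  simpa [mul_div_cancel₀ t hIs] using hz (t / (I * s)) (mem_univ s)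

theorem stmt7 (γ : ℂ) (k : ℕ) (A : MvPolynomial (Fin 2) ℂ) (Cg : Polynomial ℂ)
    (hck : ckG k (γ + 1 / 2) ≠ 0)
    -- `A = A_k^γ` : the two-variable Rodrigues-type formula
    (hA : ∀ s t : ℝ, 0 < s →
      iteratedDeriv k (fun u : ℝ => ((s ^ 2 + u ^ 2 : ℝ) : ℂ) ^ (γ + k)) t
        = MvPolynomial.eval ![(s : ℂ), (t : ℂ)] A * ((s ^ 2 + t ^ 2 : ℝ) : ℂ) ^ γ)
    -- `Cg = C_k^λ` with `λ = γ + 1/2` : the Gegenbauer Rodrigues formula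
    (hCg : ∀ t ∈ Set.Ioo (-1 : ℝ) 1,
      Cg.eval (t : ℂ)
        = ckG k (γ + 1 / 2) * ((1 - t ^ 2 : ℝ) : ℂ) ^ (-γ) *
            iteratedDeriv k (fun u : ℝ => ((1 - u ^ 2 : ℝ) : ℂ) ^ ((k : ℂ) + γ)) t) :
    ∀ s t : ℂ, s ≠ 0 →
      MvPolynomial.eval ![s, t] A
        = (ckG k (γ + 1 / 2))⁻¹ * (-Complex.I) ^ k * s ^ k *
            Cg.eval (t / (Complex.I * s)) := by
  intro s t hs
  refine eval_eq_of_eval_I_mul_eq (fun s hs u hu ↦ ?_) hs t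
  exact eval_I_mul_eq_of_rodrigues hck hs (fun t ↦ hA s t hs) hu (hCg u hu)
end
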